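/- Fixed points of the projected IMF iteration are projected stationary points of F: let E be a real Hilbert space, P : E → E a symmetric linear map (⟨P a, b⟩ = ⟨a, P b⟩ for all a, b), F : E → ℝ differentiable, φ̄ ∈ E, and v ∈ E with P v = v and ‖v‖ = 1. Define L(φ) = F(φ) − 2 F(φ̄ + ⟨v, φ − φ̄⟩ · v). If P(∇L(φ̄)) = 0 (the first-order condition at a fixed point of the projected IMF mapping), then P(∇F(φ̄)) = 0. -/

import Mathlib

/-!
The gradient of `L` at `φ̄` is `∇F(φ̄) − 2⟪∇F(φ̄), v⟫ v`, so the fixed-point condition reads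
`P ∇F(φ̄) = 2⟪∇F(φ̄), v⟫ v`. Pairing with `v` and using `P v = v`, the symmetry of `P` and
`‖v‖ = 1` gives `⟪∇F(φ̄), v⟫ = 2⟪∇F(φ̄), v⟫`, hence `⟪∇F(φ̄), v⟫ = 0` and `P ∇F(φ̄) = 0`.
-/

open RealInnerProductSpace InnerProductSpace

theorem hasFDerivAt_add_inner_sub_smul {E : Type*} [NormedAddCommGroup E]
    [InnerProductSpace ℝ E] (a v x : E) :
    HasFDerivAt (fun φ : E => a + ⟪v, φ - a⟫ • v) ((innerSL ℝ v).smulRight v) x := by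
  have hinner : HasFDerivAt (fun φ : E => ⟪v, φ - a⟫) (innerSL ℝ v) x := by
    simpa only [innerSL_apply_apply, inner_sub_right] using
      (innerSL ℝ v).hasFDerivAt.sub_const ⟪v, a⟫
  exact (hinner.smul_const v).const_add a

section Gradient

variable {E : Type*} [NormedAddCommGroup E] [InnerProductSpace ℝ E] [CompleteSpace E]
  {f g : E → ℝ} {f' g' x : E}

theorem HasGradientAt.sub (hf : HasGradientAt f f' x) (hg : HasGradientAt g g' x) :
    HasGradientAt (fun y => f y - g y) (f' - g') x := by
  rw [hasGradientAt_iff_hasFDerivAt, map_sub]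
  exact hf.hasFDerivAt.sub hg.hasFDerivAt

theorem HasGradientAt.const_mul (c : ℝ) (hf : HasGradientAt f f' x) :
    HasGradientAt (fun y => c * f y) (c • f') x := by
  rw [hasGradientAt_iff_hasFDerivAt, map_smul]
  exact hf.hasFDerivAt.const_mul c

theorem HasGradientAt.comp_add_inner_sub_smul {F : E → ℝ} {G a : E} (v : E)
    (hF : HasGradientAt F G a) :
    HasGradientAt (fun φ => F (a + ⟪v, φ - a⟫ • v)) (⟪G, v⟫ • v) a := by
  have hF' : HasFDerivAt F (toDual ℝ E G) (a + ⟪v, a - a⟫ • v) := by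
    simpa using hF.hasFDerivAt
  rw [hasGradientAt_iff_hasFDerivAt]
  refine (hF'.comp a (hasFDerivAt_add_inner_sub_smul a v a)).congr_fderiv ?_
  ext h
  simp only [ContinuousLinearMap.comp_apply, ContinuousLinearMap.smulRight_apply,
    innerSL_apply_apply, toDual_apply_apply, inner_smul_left, inner_smul_right,
    RCLike.conj_to_real, real_inner_comm v G]
  ring

end Gradient

theorem LinearMap.IsSymmetric.map_eq_zero_of_map_eq_smul {E : Type*} [NormedAddCommGroup E]
    [InnerProductSpace ℝ E] {P : E →ₗ[ℝ] E} (hP : P.IsSymmetric) {v G : E} (hPv : P v = v)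
    (hv : ‖v‖ = 1) {c : ℝ} (hc : c ≠ 1) (hPG : P G = (c * ⟪G, v⟫) • v) : P G = 0 := by
  have hGv : ⟪G, v⟫ = c * ⟪G, v⟫ := by
    calc ⟪G, v⟫ = ⟪P G, v⟫ := by rw [hP, hPv]
      _ = c * ⟪G, v⟫ := by
        rw [hPG, real_inner_smul_left, real_inner_self_eq_norm_sq, hv, one_pow, mul_one]
  have hGv0 : ⟪G, v⟫ = 0 := by
    by_contra hne
    exact hc (mul_right_cancel₀ hne (by rw [one_mul, ← hGv])).symm
  rw [hPG, hGv0, mul_zero, zero_smul]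

/-- Fixed points of the projected IMF iteration are projected stationary points of `F`:
let `E` be a real Hilbert space, `P` a symmetric linear map, `F : E → ℝ` differentiable,
`P v = v`, `‖v‖ = 1`, and `L(φ) = F(φ) − 2 F(φ̄ + ⟨v, φ − φ̄⟩ • v)`.
If `P ∇L(φ̄) = 0`, then `P ∇F(φ̄) = 0`. -/
theorem projected_imf_fixed_point_is_stationary {E : Type*} [NormedAddCommGroup E]
    [InnerProductSpace ℝ E] [CompleteSpace E]
    (P : E →ₗ[ℝ] E) (hPsymm : ∀ a b : E, ⟪P a, b⟫ = ⟪a, P b⟫)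
    (F : E → ℝ) (hF : Differentiable ℝ F)
    (φbar v : E) (hPv : P v = v) (hv : ‖v‖ = 1)
    (hL : P (gradient (fun φ : E => F φ - 2 * F (φbar + ⟪v, φ - φbar⟫ • v)) φbar) = 0) :
    P (gradient F φbar) = 0 := by
  set G := gradient F φbar
  have hG : HasGradientAt F G φbar := (hF φbar).hasGradientAt
  have hgradL : gradient (fun φ : E => F φ - 2 * F (φbar + ⟪v, φ - φbar⟫ • v)) φbar
      = G - (2 * ⟪G, v⟫) • v := by
    rw [mul_smul]
    exact (hG.sub ((hG.comp_add_inner_sub_smul v).const_mul 2)).gradient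
  rw [hgradL, map_sub, map_smul, hPv, sub_eq_zero] at hL
  exact LinearMap.IsSymmetric.map_eq_zero_of_map_eq_smul hPsymm hPv hv (by norm_num) hL
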